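/- (Theorem 1, Born-approximation inversion formula) Let k > 0, let D ⊂ ℝ³ be a bounded open set, let p, q₀ : ℝ³ → ℂ be continuous with support in D, let α, β, ℰ ∈ ℝ³ with |α| = |β| = |ℰ| = 1 and β × ℰ ≠ 0, and set sin²θ := 1 − (β·ℰ)². Define A := (1/4π) ∫_D e^{−ikβ·y} p(y) ℰ e^{ikα·y} dy + (ik/4π) ( ∫_D e^{−ikβ·y} q₀(y) e^{ikα·y} dy ) β. Then 4π·((β × A)·(β × ℰ)) / sin²θ = ∫_D e^{ik(α−β)·y} p(y) dy. -/

import Mathlib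

/- STATEMENT 15 (Theorem 1, Born-approximation inversion formula): with
A := (1/4π) ∫_D e^{−ikβ·y} p(y) ℰ e^{ikα·y} dy
   + (ik/4π)(∫_D e^{−ikβ·y} q₀(y) e^{ikα·y} dy) β,
and sin²θ := 1 − (β·ℰ)², one has
4π ((β × A)·(β × ℰ)) / sin²θ = ∫_D e^{ik(α−β)·y} p(y) dy. -/

noncomputable section

open Real Complex MeasureTheory

abbrev R3 : Type := EuclideanSpace ℝ (Fin 3)

/-- Complex cross product, by the usual coordinate formula. -/
def crossc (u v : Fin 3 → ℂ) : Fin 3 → ℂ :=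
  ![u 1 * v 2 - u 2 * v 1, u 2 * v 0 - u 0 * v 2, u 0 * v 1 - u 1 * v 0]

/-- Bilinear dot product of complex vectors (no conjugation). -/
def dotc (u v : Fin 3 → ℂ) : ℂ := ∑ i, u i * v i

/-! Only the `ℰ`-component of `A` carries the integral of `p`: the `q₀`-term, and the constant it
contributes under the integral sign, are multiples of `β` and die in `β × A`. Hence
`β × A = a (β × ℰ)` with `4π a` the desired integral, and Lagrange's identity
`(β × ℰ)·(β × ℰ) = |β|²|ℰ|² − (β·ℰ)² = sin²θ` cancels the denominator. -/

open Matrix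

lemma crossc_eq_crossProduct (u v : Fin 3 → ℂ) : crossc u v = u ⨯₃ v := rfl

lemma dotc_eq_dotProduct (u v : Fin 3 → ℂ) : dotc u v = u ⬝ᵥ v := rfl

lemma ofReal_crossProduct (u v : Fin 3 → ℝ) :
    (fun i => (u i : ℂ)) ⨯₃ (fun i => (v i : ℂ)) = fun i => ((u ⨯₃ v) i : ℂ) := by
  ext i
  fin_cases i <;> simp [cross_apply]

lemma ofReal_dotProduct {n : Type*} [Fintype n] (u v : n → ℝ) :
    (fun i => (u i : ℂ)) ⬝ᵥ (fun i => (v i : ℂ)) = ((u ⬝ᵥ v : ℝ) : ℂ) :=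
  (RingHom.map_dotProduct ofRealHom u v).symm

lemma cross_smul_add_smul_dot_cross {R : Type*} [CommRing R] (u v : Fin 3 → R) (a c : R) :
    u ⨯₃ (a • v + c • u) ⬝ᵥ u ⨯₃ v = a * (u ⬝ᵥ u * v ⬝ᵥ v - (u ⬝ᵥ v) ^ 2) := by
  simp only [map_add, map_smul, cross_self, smul_zero, add_zero, smul_dotProduct,
    cross_dot_cross, smul_eq_mul, dotProduct_comm v u]
  ring

lemma one_sub_dotProduct_sq_ne_zero {u v : Fin 3 → ℝ} (hu : u ⬝ᵥ u = 1) (hv : v ⬝ᵥ v = 1)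
    (huv : u ⨯₃ v ≠ 0) : 1 - (u ⬝ᵥ v) ^ 2 ≠ 0 := by
  have lagrange : u ⨯₃ v ⬝ᵥ u ⨯₃ v = 1 - (u ⬝ᵥ v) ^ 2 := by
    rw [cross_dot_cross, hu, hv, dotProduct_comm v u]
    ring
  rwa [← lagrange, Ne, dotProduct_self_eq_zero]

lemma EuclideanSpace.dotProduct_self_eq_one {ι : Type*} [Fintype ι] {v : EuclideanSpace ℝ ι}
    (hv : ‖v‖ = 1) : v.ofLp ⬝ᵥ v.ofLp = 1 := by
  have h := real_inner_self_eq_norm_sq v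
  rwa [hv, one_pow, EuclideanSpace.inner_eq_star_dotProduct, star_trivial] at h

lemma Continuous.integrable_of_support_subset_isBounded {X E : Type*} [PseudoMetricSpace X]
    [ProperSpace X] [MeasurableSpace X] [OpensMeasurableSpace X] {μ : Measure X}
    [IsFiniteMeasureOnCompacts μ] [NormedAddCommGroup E] {f : X → E} {s : Set X}
    (hf : Continuous f) (hs : Bornology.IsBounded s) (hfs : Function.support f ⊆ s) :
    Integrable f μ :=
  hf.integrable_of_hasCompactSupport <|
    .of_support_subset_isCompact hs.isCompact_closure (hfs.trans subset_closure)

lemma setIntegral_const_mul_add {X 𝕜 : Type*} [MeasurableSpace X] [RCLike 𝕜] {μ : Measure X}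
    {s : Set X} {g : X → 𝕜} (hg : IntegrableOn g s μ) (hs : μ s ≠ ⊤) (e d : 𝕜) :
    ∫ y in s, (e * g y + d) ∂μ = e * ∫ y in s, g y ∂μ + μ.real s • d := by
  rw [integral_add (hg.const_mul e) (integrableOn_const hs), integral_const_mul, setIntegral_const]

lemma exp_neg_mul_mul_exp_mul (κ : ℂ) (s t : ℝ) :
    exp (-κ * s) * exp (κ * t) = exp (κ * ↑(t - s)) := by
  rw [← Complex.exp_add, ofReal_sub]
  ring_nf

lemma eq_smul_add_smul_of_eq_setIntegral {ι X 𝕜 : Type*} [MeasurableSpace X] [RCLike 𝕜]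
    {μ : Measure X} {s : Set X} {A e u : ι → 𝕜} {f : ι → X → 𝕜} {g : X → 𝕜} {κ d : 𝕜}
    (hA : A = fun i => κ * ∫ y in s, (f i y + d * u i) ∂μ) (hf : ∀ i y, f i y = e i * g y)
    (hg : IntegrableOn g s μ) (hs : μ s ≠ ⊤) :
    A = (κ * ∫ y in s, g y ∂μ) • e + (κ * (μ.real s • d)) • u := by
  subst hA
  funext i
  simp only [hf, setIntegral_const_mul_add hg hs, Pi.add_apply, Pi.smul_apply, smul_eq_mul,
    RCLike.real_smul_eq_coe_mul]
  ring

theorem born_inversion_formula_general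
    (k : ℝ) (D : Set R3) (hDb : Bornology.IsBounded D)
    (p q₀ : R3 → ℂ) (hp : Continuous p)
    (hps : Function.support p ⊆ D)
    (α β ℰ : R3) (hβ : ‖β‖ = 1) (hℰ : ‖ℰ‖ = 1)
    (hβℰ : crossc (fun i => (β i : ℂ)) (fun i => (ℰ i : ℂ)) ≠ 0)
    (A : Fin 3 → ℂ)
    (hA : A = fun i =>
      (1 / (4 * (Real.pi : ℂ))) *
        ∫ y in D, Complex.exp (-(Complex.I * (k : ℂ)) * ((∑ j, β j * y j : ℝ) : ℂ))
          * (p y * ((ℰ i : ℂ) *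
              Complex.exp (Complex.I * (k : ℂ) * ((∑ j, α j * y j : ℝ) : ℂ))))
      + Complex.I * (k : ℂ) / (4 * (Real.pi : ℂ)) *
          (∫ y in D, Complex.exp (-(Complex.I * (k : ℂ)) * ((∑ j, β j * y j : ℝ) : ℂ))
            * (q₀ y *
              Complex.exp (Complex.I * (k : ℂ) * ((∑ j, α j * y j : ℝ) : ℂ))))
          * (β i : ℂ)) :
    4 * (Real.pi : ℂ) *
        dotc (crossc (fun i => (β i : ℂ)) A) (crossc (fun i => (β i : ℂ)) (fun i => (ℰ i : ℂ)))
        / ((1 - (∑ i, β i * ℰ i) ^ 2 : ℝ) : ℂ)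
      = ∫ y in D,
          Complex.exp (Complex.I * (k : ℂ) * ((∑ j, (α j - β j) * y j : ℝ) : ℂ)) * p y := by
  set g : R3 → ℂ := fun y =>
    Complex.exp (Complex.I * (k : ℂ) * ((∑ j, (α j - β j) * y j : ℝ) : ℂ)) * p y
  have hg : IntegrableOn g D :=
    ((by fun_prop : Continuous g).integrable_of_support_subset_isBounded hDb
      ((Function.support_mul_subset_right _ _).trans hps)).integrableOn
  have hAc := eq_smul_add_smul_of_eq_setIntegral (e := fun i => (ℰ i : ℂ)) hA
    (fun i y => by
      simp only [g, sub_mul, Finset.sum_sub_distrib]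
      linear_combination (ℰ i * p y) * exp_neg_mul_mul_exp_mul (I * k) _ _)
    hg hDb.measure_lt_top.ne
  have hββ := EuclideanSpace.dotProduct_self_eq_one hβ
  have hℰℰ := EuclideanSpace.dotProduct_self_eq_one hℰ
  have hcross : β.ofLp ⨯₃ ℰ.ofLp ≠ 0 := by
    refine fun h => hβℰ ?_
    rw [crossc_eq_crossProduct, ofReal_crossProduct, h]
    ext
    simp
  have hsin := ofReal_ne_zero.mpr (one_sub_dotProduct_sq_ne_zero hββ hℰℰ hcross)
  rw [dotc_eq_dotProduct, crossc_eq_crossProduct, crossc_eq_crossProduct, hAc,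
    cross_smul_add_smul_dot_cross, ofReal_dotProduct, ofReal_dotProduct, ofReal_dotProduct, hββ,
    hℰℰ]
  simp only [dotProduct] at hsin ⊢
  push_cast at hsin ⊢
  field_simp

theorem born_inversion_formula
    (k : ℝ) (hk : 0 < k) (D : Set R3) (hD : IsOpen D) (hDb : Bornology.IsBounded D)
    (p q₀ : R3 → ℂ) (hp : Continuous p) (hq : Continuous q₀)
    (hps : Function.support p ⊆ D) (hqs : Function.support q₀ ⊆ D)
    (α β ℰ : R3) (hα : ‖α‖ = 1) (hβ : ‖β‖ = 1) (hℰ : ‖ℰ‖ = 1)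
    (hβℰ : crossc (fun i => (β i : ℂ)) (fun i => (ℰ i : ℂ)) ≠ 0)
    (A : Fin 3 → ℂ)
    (hA : A = fun i =>
      (1 / (4 * (Real.pi : ℂ))) *
        ∫ y in D, Complex.exp (-(Complex.I * (k : ℂ)) * ((∑ j, β j * y j : ℝ) : ℂ))
          * (p y * ((ℰ i : ℂ) *
              Complex.exp (Complex.I * (k : ℂ) * ((∑ j, α j * y j : ℝ) : ℂ))))
      + Complex.I * (k : ℂ) / (4 * (Real.pi : ℂ)) *
          (∫ y in D, Complex.exp (-(Complex.I * (k : ℂ)) * ((∑ j, β j * y j : ℝ) : ℂ))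
            * (q₀ y *
              Complex.exp (Complex.I * (k : ℂ) * ((∑ j, α j * y j : ℝ) : ℂ))))
          * (β i : ℂ)) :
    4 * (Real.pi : ℂ) *
        dotc (crossc (fun i => (β i : ℂ)) A) (crossc (fun i => (β i : ℂ)) (fun i => (ℰ i : ℂ)))
        / ((1 - (∑ i, β i * ℰ i) ^ 2 : ℝ) : ℂ)
      = ∫ y in D,
          Complex.exp (Complex.I * (k : ℂ) * ((∑ j, (α j - β j) * y j : ℝ) : ℂ)) * p y :=
  born_inversion_formula_general k D hDb p q₀ hp hps α β ℰ hβ hℰ hβℰ A hA
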